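/- Let P and Q be probability measures on the same measurable space (Ω, F) and let A ∈ F. Then P(A) + Q(Ω \ A) ≥ (1/2) · exp(−D(P ‖ Q)), where D(P ‖ Q) is the Kullback–Leibler divergence of P with respect to Q (with the convention that the right-hand side is 0 when D(P ‖ Q) = ∞). -/

import Mathlib

open scoped Classical
open MeasureTheory

/-- The Kullback–Leibler divergence `D(P ‖ Q) = ∫ log (dP/dQ) dP`, defined to be
`⊤` unless `P ≪ Q` and the integral is finite. -/
noncomputable def klDiv {Ω : Type*} [MeasurableSpace Ω] (P Q : Measure Ω) : EReal :=
  if P ≪ Q ∧ Integrable (fun ω => Real.log ((P.rnDeriv Q ω).toReal)) P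
  then ((∫ ω, Real.log ((P.rnDeriv Q ω).toReal) ∂P : ℝ) : EReal)
  else ⊤

/-- Bretagnolle–Huber inequality: `P(A) + Q(Aᶜ) ≥ (1/2) exp(−D(P‖Q))`, with the
right-hand side read as `0` when `D(P‖Q) = ∞`. -/
theorem bretagnolle_huber {Ω : Type*} [MeasurableSpace Ω] (P Q : Measure Ω)
    [IsProbabilityMeasure P] [IsProbabilityMeasure Q]
    (A : Set Ω) (hA : MeasurableSet A) :
    (if klDiv P Q = ⊤ then (0 : ℝ) else (1 / 2) * Real.exp (-(klDiv P Q).toReal)) ≤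
      (P A).toReal + (Q Aᶜ).toReal := by
  by_cases htop : klDiv P Q = ⊤
  · simp only [htop, if_pos rfl]
    positivity
  · rw [if_neg htop]
    rw [klDiv] at htop
    by_cases hc : P ≪ Q ∧ Integrable (fun ω => Real.log ((P.rnDeriv Q ω).toReal)) P
    swap
    · exact absurd (if_neg hc) htop
    obtain ⟨hP, hint⟩ := hc
    have hkl : klDiv P Q = ((∫ ω, Real.log ((P.rnDeriv Q ω).toReal) ∂P : ℝ) : EReal) := by
      rw [klDiv, if_pos ⟨hP, hint⟩]
    rw [hkl]
    set L : ℝ := ∫ ω, Real.log ((P.rnDeriv Q ω).toReal) ∂P with hLdef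
    rw [show ((L : EReal)).toReal = L from rfl]
    set f : Ω → ENNReal := P.rnDeriv Q with hfdef
    have hfm : Measurable f := Measure.measurable_rnDeriv P Q
    -- Step 1: the minimum of the densities is a lower bound for `P A + Q Aᶜ`
    have h1 : ∫⁻ ω, min (f ω) 1 ∂Q ≤ P A + Q Aᶜ := by
      calc ∫⁻ ω, min (f ω) 1 ∂Q
          = (∫⁻ ω in A, min (f ω) 1 ∂Q) + ∫⁻ ω in Aᶜ, min (f ω) 1 ∂Q :=
            (lintegral_add_compl _ hA).symm
        _ ≤ (∫⁻ ω in A, f ω ∂Q) + ∫⁻ ω in Aᶜ, 1 ∂Q :=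
            add_le_add (lintegral_mono fun ω => min_le_left _ _)
              (lintegral_mono fun ω => min_le_right _ _)
        _ = P A + Q Aᶜ := by rw [Measure.setLIntegral_rnDeriv hP, setLIntegral_one]
    -- Step 2: Cauchy-Schwarz
    have h2 : (∫⁻ ω, (f ω) ^ ((1:ℝ)/2) ∂Q) ≤
        (∫⁻ ω, min (f ω) 1 ∂Q) ^ ((1:ℝ)/2) * (2:ENNReal) ^ ((1:ℝ)/2) := by
      have hpq : (2:ℝ).HolderConjugate 2 := ⟨by norm_num, by norm_num, by norm_num⟩
      have hmin : Measurable fun ω => (min (f ω) 1) ^ ((1:ℝ)/2) :=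
        (hfm.min measurable_const).pow_const _
      have hmax : Measurable fun ω => (max (f ω) 1) ^ ((1:ℝ)/2) :=
        (hfm.max measurable_const).pow_const _
      have hpoint : ∀ ω, (f ω) ^ ((1:ℝ)/2) =
          (min (f ω) 1) ^ ((1:ℝ)/2) * (max (f ω) 1) ^ ((1:ℝ)/2) := by
        intro ω
        rw [← ENNReal.mul_rpow_of_nonneg _ _ (by norm_num), min_mul_max, mul_one]
      have hhold := ENNReal.lintegral_mul_le_Lp_mul_Lq Q hpq hmin.aemeasurable hmax.aemeasurable
      have e1 : ∀ (x : ENNReal), (x ^ ((1:ℝ)/2)) ^ (2:ℝ) = x := by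
        intro x
        rw [← ENNReal.rpow_mul]
        norm_num
      have emax : ∫⁻ ω, max (f ω) 1 ∂Q ≤ 2 := by
        calc ∫⁻ ω, max (f ω) 1 ∂Q ≤ ∫⁻ ω, f ω + 1 ∂Q :=
              lintegral_mono fun ω => max_le (le_add_right le_rfl) (le_add_left le_rfl)
          _ = P Set.univ + Q Set.univ := by
              rw [lintegral_add_right _ measurable_const, Measure.lintegral_rnDeriv hP,
                lintegral_one]
          _ = 2 := by simp; norm_num
      calc (∫⁻ ω, (f ω) ^ ((1:ℝ)/2) ∂Q)
          = ∫⁻ ω, (min (f ω) 1) ^ ((1:ℝ)/2) * (max (f ω) 1) ^ ((1:ℝ)/2) ∂Q := by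
            simp_rw [hpoint]
        _ ≤ (∫⁻ ω, ((min (f ω) 1) ^ ((1:ℝ)/2)) ^ (2:ℝ) ∂Q) ^ ((1:ℝ)/2) *
            (∫⁻ ω, ((max (f ω) 1) ^ ((1:ℝ)/2)) ^ (2:ℝ) ∂Q) ^ ((1:ℝ)/2) := by
            exact hhold
        _ = (∫⁻ ω, min (f ω) 1 ∂Q) ^ ((1:ℝ)/2) * (∫⁻ ω, max (f ω) 1 ∂Q) ^ ((1:ℝ)/2) := by
            simp_rw [e1]
        _ ≤ (∫⁻ ω, min (f ω) 1 ∂Q) ^ ((1:ℝ)/2) * (2:ENNReal) ^ ((1:ℝ)/2) :=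
            mul_le_mul_right (ENNReal.rpow_le_rpow emax (by norm_num)) _
    -- Step 3: Jensen's inequality
    have h3 : ENNReal.ofReal (Real.exp (-(L/2))) ≤ ∫⁻ ω, (f ω) ^ ((1:ℝ)/2) ∂Q := by
      have hPf : Q.withDensity f = P := Measure.withDensity_rnDeriv_eq P Q hP
      have hfinQ : ∀ᵐ ω ∂Q, f ω < ⊤ := Measure.rnDeriv_lt_top P Q
      have hm2 : Measurable fun ω => (f ω) ^ (-(1:ℝ)/2) := hfm.pow_const _
      have heq : ∫⁻ ω, (f ω) ^ (-(1:ℝ)/2) ∂P = ∫⁻ ω, (f ω) ^ ((1:ℝ)/2) ∂Q := by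
        conv_lhs => rw [← hPf]
        rw [lintegral_withDensity_eq_lintegral_mul _ hfm hm2]
        refine lintegral_congr_ae ?_
        filter_upwards [hfinQ] with ω hω
        show f ω * (f ω) ^ (-(1:ℝ)/2) = (f ω) ^ ((1:ℝ)/2)
        rcases eq_or_ne (f ω) 0 with h0 | h0
        · rw [h0, ENNReal.zero_rpow_of_neg (by norm_num), ENNReal.zero_rpow_of_pos (by norm_num),
            zero_mul]
        · calc f ω * f ω ^ (-(1:ℝ)/2) = f ω ^ (1:ℝ) * f ω ^ (-(1:ℝ)/2) := by
                rw [ENNReal.rpow_one]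
            _ = f ω ^ ((1:ℝ) + -(1:ℝ)/2) := (ENNReal.rpow_add _ _ h0 hω.ne).symm
            _ = f ω ^ ((1:ℝ)/2) := by norm_num
      have hpos : ∀ᵐ ω ∂P, 0 < f ω := Measure.rnDeriv_pos hP
      have hfinP : ∀ᵐ ω ∂P, f ω < ⊤ := hfinQ.filter_mono hP.ae_le
      set G : Ω → ℝ := fun ω => Real.exp (Real.log ((f ω).toReal) * (-(1:ℝ)/2)) with hGdef
      have hGm : Measurable G :=
        Real.measurable_exp.comp ((Real.measurable_log.comp hfm.ennreal_toReal).mul_const _)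
      have hGnonneg : ∀ ω, 0 ≤ G ω := fun ω => Real.exp_nonneg _
      have hptP : ∀ᵐ ω ∂P, (f ω) ^ (-(1:ℝ)/2) = ENNReal.ofReal (G ω) := by
        filter_upwards [hpos, hfinP] with ω h0 hfin
        have ht : 0 < (f ω).toReal := ENNReal.toReal_pos h0.ne' hfin.ne
        conv_lhs => rw [← ENNReal.ofReal_toReal hfin.ne]
        rw [ENNReal.ofReal_rpow_of_pos ht, Real.rpow_def_of_pos ht]
      have hlintG : ∫⁻ ω, (f ω) ^ (-(1:ℝ)/2) ∂P = ∫⁻ ω, ENNReal.ofReal (G ω) ∂P :=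
        lintegral_congr_ae hptP
      have hnorm : ∫⁻ ω, ENNReal.ofReal (G ω) ∂P = ∫⁻ ω, ‖G ω‖ₑ ∂P :=
        lintegral_congr fun ω => (Real.enorm_eq_ofReal (hGnonneg ω)).symm
      rw [← heq, hlintG]
      by_cases hGint : Integrable G P
      · have hJ : Real.exp (∫ ω, Real.log ((f ω).toReal) * (-(1:ℝ)/2) ∂P) ≤ ∫ ω, G ω ∂P := by
          exact convexOn_exp.map_integral_le
            (f := fun ω => Real.log ((f ω).toReal) * (-(1:ℝ)/2))
            Real.continuous_exp.continuousOn isClosed_univ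
            (Filter.Eventually.of_forall fun ω => Set.mem_univ _) (hint.mul_const _) hGint
        have hIL : ∫ ω, Real.log ((f ω).toReal) * (-(1:ℝ)/2) ∂P = L * (-(1:ℝ)/2) :=
          integral_mul_const _ _
        have hexp : Real.exp (-(L/2)) ≤ ∫ ω, G ω ∂P := by
          rw [hIL] at hJ
          have : -(L/2) = L * (-(1:ℝ)/2) := by ring
          rw [this]; exact hJ
        have hintEq : ∫ ω, G ω ∂P = (∫⁻ ω, ENNReal.ofReal (G ω) ∂P).toReal := by
          rw [integral_eq_lintegral_of_nonneg_ae (Filter.Eventually.of_forall hGnonneg)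
            hGm.aestronglyMeasurable]
        have hfinlint : ∫⁻ ω, ENNReal.ofReal (G ω) ∂P ≠ ⊤ := by
          rw [hnorm]
          exact hGint.2.ne
        calc ENNReal.ofReal (Real.exp (-(L/2))) ≤ ENNReal.ofReal (∫ ω, G ω ∂P) :=
              ENNReal.ofReal_le_ofReal hexp
          _ = ∫⁻ ω, ENNReal.ofReal (G ω) ∂P := by
              rw [hintEq, ENNReal.ofReal_toReal hfinlint]
      · have : ∫⁻ ω, ENNReal.ofReal (G ω) ∂P = ⊤ := by
          by_contra hne
          exact hGint ⟨hGm.aestronglyMeasurable, by rwa [HasFiniteIntegral, ← hnorm,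
            lt_top_iff_ne_top]⟩
        rw [this]
        exact le_top
    -- combine
    have key : ENNReal.ofReal (Real.exp (-L)) ≤ 2 * (P A + Q Aᶜ) := by
      have hsq : ENNReal.ofReal (Real.exp (-L)) =
          (ENNReal.ofReal (Real.exp (-(L/2)))) ^ (2:ℕ) := by
        rw [← ENNReal.ofReal_pow (Real.exp_nonneg _), ← Real.exp_nat_mul]
        congr 2
        ring
      rw [hsq]
      calc (ENNReal.ofReal (Real.exp (-(L/2)))) ^ (2:ℕ)
          ≤ ((∫⁻ ω, min (f ω) 1 ∂Q) ^ ((1:ℝ)/2) * (2:ENNReal) ^ ((1:ℝ)/2)) ^ (2:ℕ) :=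
            pow_le_pow_left' (h3.trans h2) 2
        _ = (∫⁻ ω, min (f ω) 1 ∂Q) * 2 := by
            rw [mul_pow, ← ENNReal.rpow_natCast ((∫⁻ ω, min (f ω) 1 ∂Q) ^ ((1:ℝ)/2)),
              ← ENNReal.rpow_natCast ((2:ENNReal) ^ ((1:ℝ)/2)),
              ← ENNReal.rpow_mul, ← ENNReal.rpow_mul]
            norm_num
        _ ≤ (P A + Q Aᶜ) * 2 := mul_le_mul_left h1 2
        _ = 2 * (P A + Q Aᶜ) := mul_comm _ _
    have hfin : (2 : ENNReal) * (P A + Q Aᶜ) ≠ ⊤ := by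
      refine ENNReal.mul_ne_top (by simp) (ENNReal.add_ne_top.mpr ⟨?_, ?_⟩) <;>
        exact (measure_lt_top _ _).ne
    have := (ENNReal.ofReal_le_iff_le_toReal hfin).mp key
    rw [ENNReal.toReal_mul, ENNReal.toReal_add (measure_ne_top _ _) (measure_ne_top _ _)] at this
    simp only [ENNReal.toReal_ofNat] at this
    linarith
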